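/- Let n ≥ 1 and σ ∈ (0,1). The function w(x,y) = y^{2σ} (|x|² + y²)^{−(n+2σ)/2}, defined for x ∈ ℝ^n and y > 0, satisfies the degenerate elliptic equation div(y^{1−2σ} ∇_{x,y} w) = 0 at every point of ℝ^n × (0,∞); equivalently, Δ_x w + ∂²_y w + ((1−2σ)/y) ∂_y w = 0 on ℝ^n × (0,∞). -/

import Mathlib

open MeasureTheory Real

/-- The Laplacian on `ℝ^n`: sum of second partial derivatives. -/
noncomputable def lap {n : ℕ} (f : EuclideanSpace ℝ (Fin n) → ℝ) :
    EuclideanSpace ℝ (Fin n) → ℝ :=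
  fun x => ∑ i, fderiv ℝ (fun z => fderiv ℝ f z (EuclideanSpace.single i 1)) x
    (EuclideanSpace.single i 1)

/-- The generalized Poisson kernel `w(x,y) = y^(2σ) (|x|² + y²)^(-(n+2σ)/2)`. -/
noncomputable def poissonKer (n : ℕ) (σ : ℝ) (x : EuclideanSpace ℝ (Fin n)) (y : ℝ) : ℝ :=
  y ^ (2 * σ) * (‖x‖ ^ 2 + y ^ 2) ^ (-((n : ℝ) + 2 * σ) / 2)

/-! Write `r = |x|² + y²` and `p = -(n + 2σ)/2`. Then `Δ_x r^p = 2p r^(p-2) (n r + 2(p-1)|x|²)`, and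
both `y`-derivatives of `w` follow from applying
`d/dt [t^α (b + t²)^β] = α t^(α-1) (b + t²)^β + 2β t^(α+1) (b + t²)^(β-1)` twice.
Divided by `2p y^(2σ) r^(p-2)`, the left-hand side becomes `(n + 2σ + 2p) r`, which vanishes by the
choice of `p`. -/

theorem hasFDerivAt_norm_sq_add_rpow {E : Type*} [NormedAddCommGroup E] [InnerProductSpace ℝ E]
    {a : ℝ} (ha : 0 < a) (q : ℝ) (z : E) :
    HasFDerivAt (fun z : E => (‖z‖ ^ 2 + a) ^ q)
      ((2 * q * (‖z‖ ^ 2 + a) ^ (q - 1)) • innerSL ℝ z) z := by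
  convert ((hasStrictFDerivAt_norm_sq z).hasFDerivAt.add_const a).rpow_const (p := q)
    (Or.inl (by positivity)) using 1
  ext v
  simp only [FunLike.coe_smul, Pi.smul_apply, smul_eq_mul]
  ring

section Laplacian

variable {n : ℕ}

theorem lap_const_mul (c : ℝ) (f : EuclideanSpace ℝ (Fin n) → ℝ) (x : EuclideanSpace ℝ (Fin n)) :
    lap (fun z => c * f z) x = c * lap f x := by
  simp only [lap, Finset.mul_sum]
  refine Finset.sum_congr rfl fun i _ => ?_
  have h : (fun z => fderiv ℝ (fun z => c * f z) z (EuclideanSpace.single i 1))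
      = c • fun z => fderiv ℝ f z (EuclideanSpace.single i 1) := by
    rw [show (fun z => c * f z) = c • f from rfl, fderiv_const_smul_field]
    rfl
  rw [h, fderiv_const_smul_field]
  rfl

theorem fderiv_norm_sq_add_rpow_single {a : ℝ} (ha : 0 < a) (q : ℝ)
    (z : EuclideanSpace ℝ (Fin n)) (i : Fin n) :
    fderiv ℝ (fun z => (‖z‖ ^ 2 + a) ^ q) z (EuclideanSpace.single i 1)
      = 2 * q * (‖z‖ ^ 2 + a) ^ (q - 1) * z i := by
  simp [(hasFDerivAt_norm_sq_add_rpow ha q z).fderiv, EuclideanSpace.inner_single_right]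

theorem lap_norm_sq_add_rpow {a : ℝ} (ha : 0 < a) (q : ℝ) (x : EuclideanSpace ℝ (Fin n)) :
    lap (fun z => (‖z‖ ^ 2 + a) ^ q) x
      = 2 * q * (n * (‖x‖ ^ 2 + a) ^ (q - 1)
          + 2 * (q - 1) * ‖x‖ ^ 2 * (‖x‖ ^ 2 + a) ^ (q - 2)) := by
  have hpartial (i : Fin n) :
      fderiv ℝ (fun z => 2 * q * (‖z‖ ^ 2 + a) ^ (q - 1) * z i) x (EuclideanSpace.single i 1)
        = 2 * q * ((‖x‖ ^ 2 + a) ^ (q - 1) + 2 * (q - 1) * (‖x‖ ^ 2 + a) ^ (q - 2) * x i ^ 2) := by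
    have hi : HasFDerivAt (fun z : EuclideanSpace ℝ (Fin n) => z i)
        (EuclideanSpace.proj (𝕜 := ℝ) i) x := (EuclideanSpace.proj (𝕜 := ℝ) i).hasFDerivAt
    have h : HasFDerivAt
        (fun z : EuclideanSpace ℝ (Fin n) => 2 * q * (‖z‖ ^ 2 + a) ^ (q - 1) * z i) _ x :=
      ((hasFDerivAt_norm_sq_add_rpow ha (q - 1) x).const_mul (2 * q)).mul hi
    rw [h.fderiv]
    simp [EuclideanSpace.inner_single_right, show q - 1 - 1 = q - 2 by ring]
    ring
  simp only [lap, fderiv_norm_sq_add_rpow_single ha, hpartial, ← Finset.mul_sum,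
    Finset.sum_add_distrib, Finset.sum_const, Finset.card_univ, Fintype.card_fin, nsmul_eq_mul,
    EuclideanSpace.real_norm_sq_eq x]
  ring

end Laplacian

theorem hasDerivAt_rpow_mul_add_sq_rpow {b t : ℝ} (hb : 0 ≤ b) (ht : 0 < t) (α β : ℝ) :
    HasDerivAt (fun s => s ^ α * (b + s ^ 2) ^ β)
      (α * (t ^ (α - 1) * (b + t ^ 2) ^ β) + 2 * β * (t ^ (α + 1) * (b + t ^ 2) ^ (β - 1)))
      t := by
  have hpow : HasDerivAt (fun s => s ^ α) (α * t ^ (α - 1)) t :=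
    hasDerivAt_rpow_const (Or.inl ht.ne')
  have hsq : HasDerivAt (fun s => b + s ^ 2) (2 * t) t := by
    simpa using (hasDerivAt_pow 2 t).const_add b
  refine (hpow.mul (hsq.rpow_const (p := β) (Or.inl (by positivity)))).congr_deriv ?_
  rw [rpow_add_one ht.ne']
  ring

theorem stmt_10 (n : ℕ) (σ : ℝ) :
    ∀ (x : EuclideanSpace ℝ (Fin n)) (y : ℝ), 0 < y →
      lap (fun x' => poissonKer n σ x' y) x
        + deriv (fun t => deriv (fun s => poissonKer n σ x s) t) y
        + ((1 - 2 * σ) / y) * deriv (fun s => poissonKer n σ x s) y = 0 := by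
  intro x y hy
  simp only [poissonKer]
  set p : ℝ := -((n : ℝ) + 2 * σ) / 2 with hp
  have hx := sq_nonneg ‖x‖
  have hw' (t : ℝ) (ht : 0 < t) := hasDerivAt_rpow_mul_add_sq_rpow hx ht (2 * σ) p
  have hw'' := (((hasDerivAt_rpow_mul_add_sq_rpow hx hy (2 * σ - 1) p).const_mul (2 * σ)).add
      ((hasDerivAt_rpow_mul_add_sq_rpow hx hy (2 * σ + 1) (p - 1)).const_mul (2 * p)))
    |>.congr_of_eventuallyEq (f₁ := fun t => deriv (fun s => s ^ (2 * σ) * (‖x‖ ^ 2 + s ^ 2) ^ p) t)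
      (by filter_upwards [Ioi_mem_nhds hy] with t ht using (hw' t ht).deriv)
  rw [lap_const_mul, lap_norm_sq_add_rpow (by positivity), (hw' y hy).deriv, hw''.deriv]
  have hr : 0 < ‖x‖ ^ 2 + y ^ 2 := by positivity
  simp only [rpow_sub hy, rpow_add hy, rpow_sub hr, rpow_one, rpow_two]
  field_simp
  rw [hp]
  ring
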